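/- Let Λ ⊆ ℝⁿ be an odd self-dual lattice, δ ∈ Λ with δ/2 ∉ Λ ∪ S(Λ) and δ² ∈ 4ℤ, and χ ∈ Λ a characteristic vector satisfying (χ·δ)/2 ≡ δ²/4 (mod 2). Then χ is a characteristic vector of the lattice Λ⁺ = Λ_even ∪ (Λ_even + δ/2), and χ + δ is a characteristic vector of the lattice Λ⁻ = Λ_even ∪ (Λ_odd + δ/2). -/
import Mathlib


open scoped BigOperators

namespace PaperFormal

/-- Standard dot product on `ℝⁿ`. -/
def dot {n : ℕ} (x y : Fin n → ℝ) : ℝ := ∑ i, x i * y i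

/-- Squared norm. -/
def nsq {n : ℕ} (x : Fin n → ℝ) : ℝ := dot x x

/-- The dual of a set of vectors: all vectors pairing integrally with every element. -/
def dualSet {n : ℕ} (L : Set (Fin n → ℝ)) : Set (Fin n → ℝ) :=
  {x | ∀ l ∈ L, ∃ k : ℤ, dot l x = (k : ℝ)}

/-- The even-norm part `Λ₀` of a lattice. -/
def evenSub {n : ℕ} (L : Set (Fin n → ℝ)) : Set (Fin n → ℝ) :=
  {l | l ∈ L ∧ ∃ k : ℤ, dot l l = 2 * (k : ℝ)}

/-- The shadow `S(Λ) = Λ₀* \ Λ`. -/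
def shadow {n : ℕ} (L : Set (Fin n → ℝ)) : Set (Fin n → ℝ) :=
  dualSet (evenSub L) \ L

/-- An odd self-dual lattice: equal to its dual, and containing a vector of odd norm. -/
def IsOddSelfDual {n : ℕ} (L : Set (Fin n → ℝ)) : Prop :=
  L = dualSet L ∧ ∃ v ∈ L, ∃ k : ℤ, dot v v = 2 * (k : ℝ) + 1

/-- `χ` is a characteristic vector of `L`: `λ·λ ≡ χ·λ (mod 2)` for all `λ ∈ L`. -/
def IsCharacteristic {n : ℕ} (L : Set (Fin n → ℝ)) (χ : Fin n → ℝ) : Prop :=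
  χ ∈ L ∧ ∀ l ∈ L, ∃ k : ℤ, dot l l - dot χ l = 2 * (k : ℝ)

/-- `Λ_{δ-even}`. -/
def deltaEven {n : ℕ} (L : Set (Fin n → ℝ)) (δ : Fin n → ℝ) : Set (Fin n → ℝ) :=
  {l | l ∈ L ∧ ∃ k : ℤ, dot δ l = 2 * (k : ℝ)}

/-- `Λ_{δ-odd}`. -/
def deltaOdd {n : ℕ} (L : Set (Fin n → ℝ)) (δ : Fin n → ℝ) : Set (Fin n → ℝ) :=
  {l | l ∈ L ∧ ∃ k : ℤ, dot δ l = 2 * (k : ℝ) + 1}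

/-- Translate a set of vectors by `v`. -/
def shiftSet {n : ℕ} (A : Set (Fin n → ℝ)) (v : Fin n → ℝ) : Set (Fin n → ℝ) :=
  (fun x => x + v) '' A

/-- The orbifold lattice `Λ⁺ = Λ_even ∪ (Λ_even + δ/2)`. -/
def orbPlus {n : ℕ} (L : Set (Fin n → ℝ)) (δ : Fin n → ℝ) : Set (Fin n → ℝ) :=
  deltaEven L δ ∪ shiftSet (deltaEven L δ) ((2 : ℝ)⁻¹ • δ)

/-- The orbifold lattice `Λ⁻ = Λ_even ∪ (Λ_odd + δ/2)`. -/
def orbMinus {n : ℕ} (L : Set (Fin n → ℝ)) (δ : Fin n → ℝ) : Set (Fin n → ℝ) :=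
  deltaEven L δ ∪ shiftSet (deltaOdd L δ) ((2 : ℝ)⁻¹ • δ)

/-- The gauging condition for a shift vector: `δ ∈ Λ`, `δ/2 ∉ Λ ∪ S(Λ)`, `δ² ∈ 4ℤ`. -/
def GaugingCondition {n : ℕ} (L : Set (Fin n → ℝ)) (δ : Fin n → ℝ) : Prop :=
  δ ∈ L ∧ (2 : ℝ)⁻¹ • δ ∉ L ∧ (2 : ℝ)⁻¹ • δ ∉ shadow L ∧
    ∃ k : ℤ, dot δ δ = 4 * (k : ℝ)

/-- Inner product of codewords, valued in `ℤ/k`. -/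
def codeDot {n k : ℕ} (c c' : Fin n → ZMod k) : ZMod k := ∑ i, c i * c' i

/-- The dual code. -/
def dualCode {n k : ℕ} (C : Set (Fin n → ZMod k)) : Set (Fin n → ZMod k) :=
  {x | ∀ c ∈ C, codeDot c x = 0}

/-- Hamming weight of a binary codeword. -/
def wt {n : ℕ} (c : Fin n → ZMod 2) : ℕ :=
  (Finset.univ.filter fun i => c i = 1).card

/-- A singly-even self-dual binary code: self-dual, with some codeword of weight `≢ 0 (mod 4)`. -/
def IsSinglyEvenSelfDual {n : ℕ} (C : Set (Fin n → ZMod 2)) : Prop :=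
  C = dualCode C ∧ ∃ c ∈ C, ¬ (4 ∣ wt c)

/-- Lift of a binary codeword to `{0,1}ⁿ ⊆ ℝⁿ`. -/
def liftBin {n : ℕ} (c : Fin n → ZMod 2) : Fin n → ℝ := fun i => ((c i).val : ℝ)

/-- Construction A lattice of a binary code: `Λ(C) = {(c + 2m)/√2}`. -/
def constructionA {n : ℕ} (C : Set (Fin n → ZMod 2)) : Set (Fin n → ℝ) :=
  {x | ∃ c ∈ C, ∃ m : Fin n → ℤ,
    x = fun i => (liftBin c i + 2 * (m i : ℝ)) / Real.sqrt 2}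

/-- Construction A lattice of a `ℤ/k` code: `Λ(C) = {(c + km)/√k}`. -/
def constructionAZ {n : ℕ} (k : ℕ) (C : Set (Fin n → ZMod k)) : Set (Fin n → ℝ) :=
  {x | ∃ c ∈ C, ∃ m : Fin n → ℤ,
    x = fun i => (((c i).val : ℝ) + (k : ℝ) * (m i : ℝ)) / Real.sqrt k}

/-- The shift vector `δ = (1,…,1)/√2`. -/
noncomputable def deltaAll (n : ℕ) : Fin n → ℝ := fun _ => 1 / Real.sqrt 2

/-- Theta function of a set of vectors, `Θ_L(q) = Σ_{λ∈L} q^{λ²/2}`. -/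
noncomputable def thetaSet {n : ℕ} (L : Set (Fin n → ℝ)) (q : ℝ) : ℝ :=
  ∑' l : L, q ^ (dot (l : Fin n → ℝ) (l : Fin n → ℝ) / 2)

/-- Jacobi theta function `θ₂(q) = Σ_m q^{(m+1/2)²/2}`. -/
noncomputable def theta2 (q : ℝ) : ℝ := ∑' m : ℤ, q ^ (((m : ℝ) + 1 / 2) ^ 2 / 2)

/-- Jacobi theta function `θ₃(q) = Σ_m q^{m²/2}`. -/
noncomputable def theta3 (q : ℝ) : ℝ := ∑' m : ℤ, q ^ ((m : ℝ) ^ 2 / 2)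

/-- Jacobi theta function `θ₄(q) = Σ_m (−1)^m q^{m²/2}`. -/
noncomputable def theta4 (q : ℝ) : ℝ := ∑' m : ℤ, (-1 : ℝ) ^ m * q ^ ((m : ℝ) ^ 2 / 2)

/-- `ℤⁿ₊`: integer vectors with even coordinate sum. -/
def intEven (n : ℕ) : Set (Fin n → ℤ) := {m | Even (∑ i, m i)}

/-- `ℤⁿ₋`: integer vectors with odd coordinate sum. -/
def intOdd (n : ℕ) : Set (Fin n → ℤ) := {m | Odd (∑ i, m i)}

/-- The doubly-even subcode `C₀` of a binary code. -/
def doublyEvenSub {n : ℕ} (C : Set (Fin n → ZMod 2)) : Set (Fin n → ZMod 2) :=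
  {c | c ∈ C ∧ wt c % 4 = 0}

/-- The code shadow `S(C) = C₀⊥ \ C`. -/
def codeShadow {n : ℕ} (C : Set (Fin n → ZMod 2)) : Set (Fin n → ZMod 2) :=
  dualCode (doublyEvenSub C) \ C

lemma dot_comm' {n : ℕ} (x y : Fin n → ℝ) : dot x y = dot y x :=
  Finset.sum_congr rfl fun i _ => mul_comm _ _

lemma dot_add_left' {n : ℕ} (x y z : Fin n → ℝ) :
    dot (x + y) z = dot x z + dot y z := by
  unfold dot
  rw [← Finset.sum_add_distrib]
  exact Finset.sum_congr rfl fun i _ => by simp [add_mul]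

lemma dot_add_right' {n : ℕ} (x y z : Fin n → ℝ) :
    dot x (y + z) = dot x y + dot x z := by
  rw [dot_comm', dot_add_left', dot_comm' y x, dot_comm' z x]

lemma dot_smul_left' {n : ℕ} (c : ℝ) (x y : Fin n → ℝ) :
    dot (c • x) y = c * dot x y := by
  unfold dot
  rw [Finset.mul_sum]
  exact Finset.sum_congr rfl fun i _ => by simp [mul_assoc]

lemma dot_smul_right' {n : ℕ} (c : ℝ) (x y : Fin n → ℝ) :
    dot x (c • y) = c * dot x y := by
  rw [dot_comm', dot_smul_left', dot_comm']

lemma dot_shift_sq {n : ℕ} (e δ : Fin n → ℝ) :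
    dot (e + (2:ℝ)⁻¹ • δ) (e + (2:ℝ)⁻¹ • δ)
      = dot e e + dot δ e + dot δ δ / 4 := by
  rw [dot_add_left', dot_add_right', dot_add_right', dot_smul_left',
    dot_smul_left', dot_smul_right', dot_smul_right', dot_comm' e δ]
  ring

lemma dot_shift_chi {n : ℕ} (χ e δ : Fin n → ℝ) :
    dot χ (e + (2:ℝ)⁻¹ • δ) = dot χ e + dot χ δ / 2 := by
  rw [dot_add_right', dot_smul_right']; ring

lemma mem_add_of_selfdual {n : ℕ} {L : Set (Fin n → ℝ)} (hLd : L = dualSet L)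
    {x y : Fin n → ℝ} (hx : x ∈ L) (hy : y ∈ L) : x + y ∈ L := by
  rw [hLd] at hx hy ⊢
  intro l hl
  obtain ⟨a, ha⟩ := hx l hl
  obtain ⟨b, hb⟩ := hy l hl
  exact ⟨a + b, by rw [dot_add_right', ha, hb]; push_cast; ring⟩

/-- `χ` is characteristic for `Λ⁺` and `χ + δ` is characteristic for `Λ⁻`. -/
theorem characteristic_of_orbifold {n : ℕ} (L : Set (Fin n → ℝ))
    (hL : IsOddSelfDual L) (δ : Fin n → ℝ) (hδ : GaugingCondition L δ)
    (χ : Fin n → ℝ) (hχ : IsCharacteristic L χ)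
    (hcong : ∃ k : ℤ, dot χ δ / 2 - dot δ δ / 4 = 2 * (k : ℝ)) :
    IsCharacteristic (orbPlus L δ) χ ∧ IsCharacteristic (orbMinus L δ) (χ + δ) := by
  obtain ⟨hLd, -⟩ := hL
  obtain ⟨hδL, -, -, k0, hδδ⟩ := hδ
  obtain ⟨hχL, hχchar⟩ := hχ
  obtain ⟨kc, hkc⟩ := hcong
  -- δ·χ = 2*(2kc + k0)
  have hδχ : dot δ χ = 2 * ((2 * kc + k0 : ℤ) : ℝ) := by
    rw [dot_comm']; push_cast; linarith
  -- χ ∈ deltaEven L δ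
  have hχe : χ ∈ deltaEven L δ := ⟨hχL, ⟨2 * kc + k0, hδχ⟩⟩
  constructor
  · refine ⟨Or.inl hχe, ?_⟩
    rintro l (⟨hlL, -⟩ | ⟨e, ⟨heL, ke, hke⟩, rfl⟩)
    · exact hχchar l hlL
    · obtain ⟨kχ, hkχ⟩ := hχchar e heL
      refine ⟨kχ + ke - kc, ?_⟩
      rw [dot_shift_sq, dot_shift_chi]
      push_cast
      linarith
  · -- χ + δ ∈ deltaEven L δ
    have hχδ : χ + δ ∈ deltaEven L δ := by
      refine ⟨mem_add_of_selfdual hLd hχL hδL, ⟨2 * kc + k0 + 2 * k0, ?_⟩⟩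
      rw [dot_add_right', hδχ, hδδ]; push_cast; ring
    refine ⟨Or.inl hχδ, ?_⟩
    rintro l (⟨hlL, kl, hkl⟩ | ⟨o, ⟨hoL, ko, hko⟩, rfl⟩)
    · obtain ⟨kχ, hkχ⟩ := hχchar l hlL
      refine ⟨kχ - kl, ?_⟩
      rw [dot_add_left', dot_comm' δ l] at *
      push_cast
      linarith
    · obtain ⟨kχ, hkχ⟩ := hχchar o hoL
      refine ⟨kχ - kc - k0, ?_⟩
      rw [dot_shift_sq]
      rw [dot_add_left', dot_shift_chi, dot_shift_chi]
      rw [dot_comm' δ o] at hko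
      push_cast
      linarith

end PaperFormal
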